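/- arXiv:2312.16369 — 4 statements merged into one kernel-verified Lean document; each statement's English description precedes it below -/
import Mathlib

section
/- In any alternative algebra A over a field of characteristic 0, the operator D_{a,b} = [L_a, L_b] + [R_a, R_b] + [L_a, R_b] is a derivation of A for all a, b in A. -/
/-- The inner-derivation operator `D_{a,b} = [L_a, L_b] + [R_a, R_b] + [L_a, R_b]`. -/
def innerDeriv (k : Type*) {A : Type*} [CommRing k] [NonUnitalNonAssocRing A]
    [Module k A] [SMulCommClass k A A] [IsScalarTower k A A] (a b : A) :
    Module.End k A :=
  ⁅LinearMap.mulLeft k a, LinearMap.mulLeft k b⁆ +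
    ⁅LinearMap.mulRight k a, LinearMap.mulRight k b⁆ +
    ⁅LinearMap.mulLeft k a, LinearMap.mulRight k b⁆

/-!
Call `(U, V, W)` a related triple if `U (x * y) = V x * y + x * W y` for all `x, y`; a
derivation is a triple `(D, D, D)`. Related triples are closed under sums and componentwise
commutators. In an alternative algebra the associator is alternating, which makes
`(L_a, L_a + R_a, -L_a)` and `(R_a, -R_a, L_a + R_a)` related triples and gives
`[L_a, R_b] = [R_a, L_b]`. Combining the triples of `a` and `b` by commutators and sums yields
a related triple with first component `D_{a,b}`, and the identity `[L_a, R_b] = [R_a, L_b]`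
shows that its other two components are `D_{a,b}` as well.
-/

section Associator

variable {A : Type*} [NonUnitalNonAssocRing A]

theorem associator_swap_left (halt₁ : ∀ x y : A, (x * x) * y = x * (x * y)) (x y z : A) :
    associator x y z = -associator y x z := by
  have h := halt₁ (x + y) z
  simp only [add_mul, mul_add, halt₁] at h
  rw [associator_apply, associator_apply]
  linear_combination (norm := abel1) h

theorem associator_swap_right (halt₂ : ∀ x y : A, (x * y) * y = x * (y * y)) (x y z : A) :
    associator x y z = -associator x z y := by
  have h := halt₂ x (y + z)
  simp only [add_mul, mul_add, halt₂] at h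
  rw [associator_apply, associator_apply]
  linear_combination (norm := abel1) h

end Associator

section RelatedTriple

variable {k A : Type*} [Semiring k] [NonUnitalNonAssocRing A] [Module k A]

def IsRelatedTriple (U V W : Module.End k A) : Prop :=
  ∀ x y : A, U (x * y) = V x * y + x * W y

namespace IsRelatedTriple

variable {U V W U' V' W' : Module.End k A}

theorem add (h : IsRelatedTriple U V W) (h' : IsRelatedTriple U' V' W') :
    IsRelatedTriple (U + U') (V + V') (W + W') := fun x y => by
  simp only [LinearMap.add_apply, h x y, h' x y, add_mul, mul_add]
  abel

theorem lie (h : IsRelatedTriple U V W) (h' : IsRelatedTriple U' V' W') :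
    IsRelatedTriple ⁅U, U'⁆ ⁅V, V'⁆ ⁅W, W'⁆ := fun x y => by
  simp only [Ring.lie_def, LinearMap.sub_apply, Module.End.mul_apply, h x y, h' x y, map_add,
    h (V' x) y, h x (W' y), h' (V x) y, h' x (W y), sub_mul, mul_sub]
  abel

end IsRelatedTriple

end RelatedTriple

section Alternative

variable {k A : Type*} [CommSemiring k] [NonUnitalNonAssocRing A] [Module k A]
  [SMulCommClass k A A] [IsScalarTower k A A]

open LinearMap

theorem isRelatedTriple_mulLeft (halt₁ : ∀ x y : A, (x * x) * y = x * (x * y)) (a : A) :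
    IsRelatedTriple (mulLeft k a) (mulLeft k a + mulRight k a) (-mulLeft k a) := fun x y => by
  have h := associator_swap_left halt₁ a x y
  simp only [associator_apply] at h
  simp only [LinearMap.add_apply, LinearMap.neg_apply, mulLeft_apply, mulRight_apply, add_mul,
    mul_neg]
  linear_combination (norm := abel1) -h

theorem isRelatedTriple_mulRight (halt₂ : ∀ x y : A, (x * y) * y = x * (y * y)) (a : A) :
    IsRelatedTriple (mulRight k a) (-mulRight k a) (mulLeft k a + mulRight k a) := fun x y => by
  have h := associator_swap_right halt₂ x y a
  simp only [associator_apply] at h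
  simp only [LinearMap.add_apply, LinearMap.neg_apply, mulLeft_apply, mulRight_apply, mul_add,
    neg_mul]
  linear_combination (norm := abel1) h

theorem lie_mulLeft_mulRight_comm (halt₁ : ∀ x y : A, (x * x) * y = x * (x * y))
    (halt₂ : ∀ x y : A, (x * y) * y = x * (y * y)) (a b : A) :
    ⁅mulLeft k a, mulRight k b⁆ = ⁅mulRight k a, mulLeft k b⁆ := by
  ext x
  have h : associator b x a = -associator a x b := by
    rw [associator_swap_left halt₁ b, associator_swap_right halt₂ x,
      associator_swap_left halt₁ x, neg_neg]
  simp only [associator_apply] at h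
  simp only [Ring.lie_def, LinearMap.sub_apply, Module.End.mul_apply, mulLeft_apply,
    mulRight_apply]
  linear_combination (norm := abel1) -h

end Alternative

theorem isRelatedTriple_innerDeriv {k A : Type*} [CommRing k] [NonUnitalNonAssocRing A]
    [Module k A] [SMulCommClass k A A] [IsScalarTower k A A]
    (halt₁ : ∀ x y : A, (x * x) * y = x * (x * y))
    (halt₂ : ∀ x y : A, (x * y) * y = x * (y * y)) (a b : A) :
    IsRelatedTriple (innerDeriv k a b) (innerDeriv k a b) (innerDeriv k a b) := by
  have hL := isRelatedTriple_mulLeft (k := k) halt₁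
  have hR := isRelatedTriple_mulRight (k := k) halt₂
  have key := (((hL a).lie (hL b)).add ((hR a).lie (hR b))).add ((hL a).lie (hR b))
  have hLR := lie_mulLeft_mulRight_comm (k := k) halt₁ halt₂ a b
  simp only [Ring.lie_def] at hLR
  -- the second and third components of `key` both equal `D_{a,b} + [R_a, L_b] - [L_a, R_b]`
  convert key using 1 <;> simp only [innerDeriv, Ring.lie_def] <;>
    linear_combination (norm := noncomm_ring) hLR

theorem innerDeriv_is_derivation_general {k A : Type*} [Field k]
    [NonUnitalNonAssocRing A] [Module k A] [SMulCommClass k A A] [IsScalarTower k A A]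
    (halt₁ : ∀ x y : A, (x * x) * y = x * (x * y))
    (halt₂ : ∀ x y : A, (x * y) * y = x * (y * y))
    (a b : A) :
    ∀ x y : A, innerDeriv k a b (x * y) =
      innerDeriv k a b x * y + x * innerDeriv k a b y :=
  isRelatedTriple_innerDeriv halt₁ halt₂ a b

/-- In any alternative algebra `A` over a field of characteristic `0`, the operator
`D_{a,b} = [L_a, L_b] + [R_a, R_b] + [L_a, R_b]` is a derivation of `A`. -/
theorem innerDeriv_is_derivation {k A : Type*} [Field k] [CharZero k]
    [NonUnitalNonAssocRing A] [Module k A] [SMulCommClass k A A] [IsScalarTower k A A]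
    (halt₁ : ∀ x y : A, (x * x) * y = x * (x * y))
    (halt₂ : ∀ x y : A, (x * y) * y = x * (y * y))
    (a b : A) :
    ∀ x y : A, innerDeriv k a b (x * y) =
      innerDeriv k a b x * y + x * innerDeriv k a b y :=
  innerDeriv_is_derivation_general halt₁ halt₂ a b
end

section
/- In any alternative algebra A over a field of characteristic 0, for every derivation D of A and all a, b in A, one has [D, D_{a,b}] = D_{D(a),b} + D_{a,D(b)}, where D_{x,y} = [L_x, L_y] + [R_x, R_y] + [L_x, R_y]. Consequently, the span of all D_{a,b} is an ideal of the Lie algebra of derivations of A. -/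
section

attribute [local instance] LieRing.ofAssociativeRing

variable {k A : Type*} [CommRing k] [NonUnitalNonAssocRing A] [Module k A]
  {D : Module.End k A} (hD : ∀ x y : A, D (x * y) = D x * y + x * D y)

include hD

lemma lie_mulLeft_of_leibniz [SMulCommClass k A A] (a : A) :
    ⁅D, LinearMap.mulLeft k a⁆ = LinearMap.mulLeft k (D a) := by
  ext x
  simp [Ring.lie_def, hD]

lemma lie_mulRight_of_leibniz [IsScalarTower k A A] (a : A) :
    ⁅D, LinearMap.mulRight k a⁆ = LinearMap.mulRight k (D a) := by
  ext x
  simp [Ring.lie_def, hD]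

variable [SMulCommClass k A A] [IsScalarTower k A A]

lemma lie_innerDeriv_of_leibniz (a b : A) :
    ⁅D, innerDeriv k a b⁆ = innerDeriv k (D a) b + innerDeriv k a (D b) := by
  simp only [innerDeriv, lie_add, leibniz_lie D, lie_mulLeft_of_leibniz hD,
    lie_mulRight_of_leibniz hD]
  abel

lemma lie_mem_span_innerDeriv_of_leibniz {T : Module.End k A}
    (hT : T ∈ Submodule.span k {T : Module.End k A | ∃ a b : A, T = innerDeriv k a b}) :
    ⁅D, T⁆ ∈ Submodule.span k {T : Module.End k A | ∃ a b : A, T = innerDeriv k a b} := by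
  induction hT using Submodule.span_induction with
  | mem T hT =>
    obtain ⟨a, b, rfl⟩ := hT
    rw [lie_innerDeriv_of_leibniz hD]
    exact add_mem (Submodule.subset_span ⟨D a, b, rfl⟩)
      (Submodule.subset_span ⟨a, D b, rfl⟩)
  | zero => simpa only [lie_zero] using zero_mem _
  | add _ _ _ _ hS hT => simpa only [lie_add] using add_mem hS hT
  | smul c _ _ hT => simpa only [lie_smul] using Submodule.smul_mem _ c hT

end

theorem innerDeriv_lie_deriv_general {k A : Type*} [Field k]
    [NonUnitalNonAssocRing A] [Module k A] [SMulCommClass k A A] [IsScalarTower k A A] :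
    (∀ D : Module.End k A, (∀ x y : A, D (x * y) = D x * y + x * D y) →
      ∀ a b : A, ⁅D, innerDeriv k a b⁆ = innerDeriv k (D a) b + innerDeriv k a (D b)) ∧
    (∀ D : Module.End k A, (∀ x y : A, D (x * y) = D x * y + x * D y) →
      ∀ T ∈ Submodule.span k {T : Module.End k A | ∃ a b : A, T = innerDeriv k a b},
        ⁅D, T⁆ ∈ Submodule.span k {T : Module.End k A | ∃ a b : A, T = innerDeriv k a b}) :=
  ⟨fun _ hD => lie_innerDeriv_of_leibniz hD,
    fun _ hD _ => lie_mem_span_innerDeriv_of_leibniz hD⟩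

/-- In any alternative algebra `A` over a field of characteristic `0`, for every derivation
`D` of `A` one has `[D, D_{a,b}] = D_{D(a),b} + D_{a,D(b)}`; consequently the span of all
`D_{a,b}` is an ideal of the Lie algebra of derivations of `A`:  the bracket of any
derivation with any element of the span again lies in the span. -/
theorem innerDeriv_lie_deriv {k A : Type*} [Field k] [CharZero k]
    [NonUnitalNonAssocRing A] [Module k A] [SMulCommClass k A A] [IsScalarTower k A A]
    (halt₁ : ∀ x y : A, (x * x) * y = x * (x * y))
    (halt₂ : ∀ x y : A, (x * y) * y = x * (y * y)) :
    (∀ D : Module.End k A, (∀ x y : A, D (x * y) = D x * y + x * D y) →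
      ∀ a b : A, ⁅D, innerDeriv k a b⁆ = innerDeriv k (D a) b + innerDeriv k a (D b)) ∧
    (∀ D : Module.End k A, (∀ x y : A, D (x * y) = D x * y + x * D y) →
      ∀ T ∈ Submodule.span k {T : Module.End k A | ∃ a b : A, T = innerDeriv k a b},
        ⁅D, T⁆ ∈ Submodule.span k {T : Module.End k A | ∃ a b : A, T = innerDeriv k a b}) :=
  innerDeriv_lie_deriv_general
end

section
/- In any alternative algebra A, D_{a,b} = L_{[a,b]} - R_{[a,b]} - 3[L_a, R_b] for all a, b in A, where D_{a,b} = [L_a, L_b] + [R_a, R_b] + [L_a, R_b] and [a,b] = ab - ba. -/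
/-!
In an alternative algebra the associator `(x, y, z) = (xy)z - x(yz)` is alternating: the left
(right) alternative law, polarized, makes it skew in its first (last) two arguments. Evaluated at
`x`, the difference of the two sides of the identity is
`(b,a,x) - (a,b,x) + (x,b,a) - (x,a,b) - 4 (a,x,b)` in any nonassociative algebra, and for an
alternating associator this is `-2 - 2 + 4 = 0` times `(a,b,x)`.
-/

section Associator

variable {R : Type*} [NonUnitalNonAssocRing R]

theorem associator_swap_left_of_left_alternative
    (h : ∀ x y : R, (x * x) * y = x * (x * y)) (x y z : R) :
    associator y x z = -associator x y z := by
  have hxy := h (x + y) z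
  simp only [add_mul, mul_add, h x z, h y z] at hxy
  simp only [associator_apply]
  linear_combination (norm := abel1) hxy

theorem associator_swap_right_of_right_alternative
    (h : ∀ x y : R, (x * y) * y = x * (y * y)) (x y z : R) :
    associator x z y = -associator x y z := by
  have hyz := h x (y + z)
  simp only [add_mul, mul_add, h x y, h x z] at hyz
  simp only [associator_apply]
  linear_combination (norm := abel1) hyz

theorem associator_rotate_of_alternative
    (h₁ : ∀ x y : R, (x * x) * y = x * (x * y)) (h₂ : ∀ x y : R, (x * y) * y = x * (y * y))
    (x y z : R) : associator x y z = associator y z x := by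
  rw [← neg_inj, ← associator_swap_left_of_left_alternative h₁,
    associator_swap_right_of_right_alternative h₂]

end Associator

theorem innerDeriv_sub_apply {k A : Type*} [CommRing k] [NonUnitalNonAssocRing A] [Module k A]
    [SMulCommClass k A A] [IsScalarTower k A A] (a b x : A) :
    (innerDeriv k a b - (LinearMap.mulLeft k (a * b - b * a) -
        LinearMap.mulRight k (a * b - b * a) -
        3 • ⁅LinearMap.mulLeft k a, LinearMap.mulRight k b⁆)) x =
      associator b a x - associator a b x + associator x b a - associator x a b -
        4 • associator a x b := by
  simp only [innerDeriv, Ring.lie_def, LinearMap.sub_apply, LinearMap.add_apply,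
    Module.End.mul_apply, LinearMap.smul_apply, LinearMap.mulLeft_apply,
    LinearMap.mulRight_apply, associator_apply, sub_mul, mul_sub]
  abel

theorem innerDeriv_eq_general {k A : Type*} [Field k]
    [NonUnitalNonAssocRing A] [Module k A] [SMulCommClass k A A] [IsScalarTower k A A]
    (halt₁ : ∀ x y : A, (x * x) * y = x * (x * y))
    (halt₂ : ∀ x y : A, (x * y) * y = x * (y * y))
    (a b : A) :
    innerDeriv k a b =
      LinearMap.mulLeft k (a * b - b * a) - LinearMap.mulRight k (a * b - b * a) -
        3 • ⁅LinearMap.mulLeft k a, LinearMap.mulRight k b⁆ := by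
  refine sub_eq_zero.mp (LinearMap.ext fun x => ?_)
  rw [innerDeriv_sub_apply, LinearMap.zero_apply,
    associator_swap_left_of_left_alternative halt₁ a b x,
    associator_swap_right_of_right_alternative halt₂ x a b,
    associator_swap_right_of_right_alternative halt₂ a b x,
    associator_rotate_of_alternative halt₁ halt₂ x a b]
  abel

/-- In any alternative algebra `A`,
`D_{a,b} = L_{[a,b]} - R_{[a,b]} - 3 [L_a, R_b]`, where `[a,b] = ab - ba`. -/
theorem innerDeriv_eq {k A : Type*} [Field k] [CharZero k]
    [NonUnitalNonAssocRing A] [Module k A] [SMulCommClass k A A] [IsScalarTower k A A]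
    (halt₁ : ∀ x y : A, (x * x) * y = x * (x * y))
    (halt₂ : ∀ x y : A, (x * y) * y = x * (y * y))
    (a b : A) :
    innerDeriv k a b =
      LinearMap.mulLeft k (a * b - b * a) - LinearMap.mulRight k (a * b - b * a) -
        3 • ⁅LinearMap.mulLeft k a, LinearMap.mulRight k b⁆ :=
  innerDeriv_eq_general halt₁ halt₂ a b
end

section
/- Let W be the Weyl group of the affine Kac–Moody algebra of type A2^(1), ρ a weight with ρ(αᵢ∨) = 1 for i = 0,1,2, and δ the basic imaginary root. Then for w, w' in W with w ≠ w', the weights w(ρ) - ρ and w'(ρ) - ρ are not congruent modulo ℤδ. -/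
/-!
Put `u = w'⁻¹ w ∈ W`. Since `W` fixes `δ`, the hypothesis becomes `u(ρ) = ρ + nδ`, and it suffices
to show that this forces `u = 1`. The invariant form gives
`(ρ|ρ) = (ρ + nδ|ρ + nδ) = (ρ|ρ) + 2n ρ(c) = (ρ|ρ) + 6n`, so `n = 0`.

In `ε`-coordinates `r₁, r₂` permute the coordinates and `r₀` acts by
`x ↦ (x₂ + λ(c), x₁, x₀ - λ(c))`, so every element of `W` acts as `x ↦ x ∘ σ + λ(c) t` with
`σ ∈ S₃`, `t ∈ ℤ³` (this is `W ≅ S₃ ⋉ Q∨`). The coordinates `(1, 0, -1)` of `ρ` are pairwise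
incongruent modulo `ρ(c) = 3`, so `u(ρ) = ρ` forces `σ = 1` and `t = 0`. Then `u` preserves the
`ε`-coordinates and the level, and `(uλ|ρ) = (λ|ρ)` pins down the `d`-coordinate as well.
-/

section A2affine

variable (k : Type*) [Field k] [CharZero k]

/-- The dual `ĥ*` of the extended Cartan subalgebra of affine `A₂⁽¹⁾`, with coordinates
recording the values on `α₀∨, α₁∨, α₂∨, d`. -/
abbrev Vaff := Fin 4 → k

/-- The simple roots `α₀, α₁, α₂` of affine type `A₂⁽¹⁾`, as elements of `ĥ*`
(`αᵢ(αⱼ∨)` is the affine Cartan matrix and `αᵢ(d) = δ_{i0}`). -/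
def affRoot : Fin 3 → Vaff k
  | 0 => ![2, -1, -1, 1]
  | 1 => ![-1, 2, -1, 0]
  | 2 => ![-1, -1, 2, 0]

/-- The simple reflections `rᵢ(λ) = λ - λ(αᵢ∨) αᵢ`. -/
def affRefl (i : Fin 3) : Vaff k ≃ₗ[k] Vaff k :=
  Module.reflection (x := affRoot k i) (f := LinearMap.proj i.castSucc)
    (by fin_cases i <;> simp [affRoot, LinearMap.proj, Fin.castSucc, Fin.castAdd, Fin.castLE])

/-- The affine Weyl group of type `A₂⁽¹⁾`, generated by the three simple reflections. -/
def affWeylGroup : Subgroup (Vaff k ≃ₗ[k] Vaff k) :=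
  Subgroup.closure (Set.range (affRefl k))

/-- The Weyl vector `ρ`, normalized by `ρ(αᵢ∨) = 1` for `i = 0,1,2` (and `ρ(d) = 0`). -/
def affRho : Vaff k := ![1, 1, 1, 0]

/-- The basic imaginary root `δ = α₀ + α₁ + α₂`. -/
def affDelta : Vaff k := affRoot k 0 + affRoot k 1 + affRoot k 2

/-- `λ(c)` for the canonical central element `c = α₀∨ + α₁∨ + α₂∨`. -/
def affLevel (l : Vaff k) : k := l 0 + l 1 + l 2

/-- The coordinates of the finite part `λ₁ω₁ + λ₂ω₂` of `λ` in the realisation of `A₂` in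
`{x ∈ k³ | x₀ + x₁ + x₂ = 0}` with `α₁ = ε₀ - ε₁`, `α₂ = ε₁ - ε₂`. -/
def affEps (l : Vaff k) : Fin 3 → k :=
  ![(2 * l 1 + l 2) / 3, (l 2 - l 1) / 3, -(l 1 + 2 * l 2) / 3]

/-- The normalized invariant form `(λ|μ) = (λ̄|μ̄) + λ(c) μ(d) + λ(d) μ(c)`. -/
def affForm (l m : Vaff k) : k :=
  ∑ i, affEps k l i * affEps k m i + affLevel k l * m 3 + l 3 * affLevel k m

def ActsAsAffinePerm (u : Vaff k ≃ₗ[k] Vaff k) : Prop :=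
  ∃ (σ : Equiv.Perm (Fin 3)) (t : Fin 3 → ℤ),
    ∀ l, affEps k (u l) = affEps k l ∘ σ + affLevel k l • fun j => (t j : k)

section

omit [CharZero k]

lemma affRefl_apply (i : Fin 3) (l : Vaff k) :
    affRefl k i l = l - l i.castSucc • affRoot k i := by
  rw [affRefl, Module.reflection_apply]
  rfl

lemma affRefl_affDelta (i : Fin 3) : affRefl k i (affDelta k) = affDelta k := by
  fin_cases i <;>
  · ext j
    fin_cases j <;> norm_num [affRefl_apply, affDelta, affRoot]

@[elab_as_elim]
lemma affWeylGroup_induction {p : ∀ u, u ∈ affWeylGroup k → Prop}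
    (refl : ∀ i, p (affRefl k i) (Subgroup.subset_closure ⟨i, rfl⟩))
    (one : p 1 (one_mem _))
    (mul : ∀ u v hu hv, p u hu → p v hv → p (u * v) (mul_mem hu hv))
    {u : Vaff k ≃ₗ[k] Vaff k} (hu : u ∈ affWeylGroup k) : p u hu := by
  induction hu using Subgroup.closure_induction'' with
  | mem _ h => obtain ⟨i, rfl⟩ := h; exact refl i
  | inv_mem _ h => obtain ⟨i, rfl⟩ := h; exact refl i
  | one => exact one
  | mul u v hu hv pu pv => exact mul u v hu hv pu pv

lemma map_affDelta_of_mem {u : Vaff k ≃ₗ[k] Vaff k} (hu : u ∈ affWeylGroup k) :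
    u (affDelta k) = affDelta k := by
  have : affWeylGroup k ≤ MulAction.stabilizer _ (affDelta k) :=
    Subgroup.closure_le _ |>.mpr <| Set.range_subset_iff.mpr (affRefl_affDelta k)
  exact this hu

lemma ActsAsAffinePerm.mul {u v : Vaff k ≃ₗ[k] Vaff k} (hu : ActsAsAffinePerm k u)
    (hv : ActsAsAffinePerm k v) (hv_level : ∀ l, affLevel k (v l) = affLevel k l) :
    ActsAsAffinePerm k (u * v) := by
  obtain ⟨σ, s, hσ⟩ := hu
  obtain ⟨τ, t, hτ⟩ := hv
  refine ⟨τ * σ, t ∘ σ + s, fun l => ?_⟩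
  ext j
  simp only [LinearEquiv.mul_apply, hσ, hτ, hv_level, Pi.add_apply, Function.comp_apply,
    Pi.smul_apply, smul_eq_mul, Equiv.Perm.coe_mul, Int.cast_add]
  ring

lemma affForm_affDelta (l : Vaff k) : affForm k l (affDelta k) = affLevel k l := by
  norm_num [affForm, affEps, affLevel, affDelta, affRoot, Fin.sum_univ_three,
    Matrix.cons_val_two, Matrix.cons_val_three]

lemma affLevel_affRho : affLevel k (affRho k) = 3 := by
  norm_num [affLevel, affRho, Matrix.cons_val_two]

lemma affForm_affRho (l : Vaff k) :
    affForm k l (affRho k) = ∑ i, affEps k l i * affEps k (affRho k) i + 3 * l 3 := by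
  rw [affForm, affLevel_affRho, show affRho k 3 = 0 from rfl, mul_zero, add_zero, mul_comm]

end

lemma affForm_affRefl (i : Fin 3) (l m : Vaff k) :
    affForm k (affRefl k i l) (affRefl k i m) = affForm k l m := by
  fin_cases i <;>
  · simp only [affRefl_apply, affForm, affEps, affLevel, affRoot, Fin.sum_univ_three, Fin.isValue,
      Fin.zero_eta, Fin.mk_one, Fin.reduceFinMk, Fin.castSucc_zero, Fin.castSucc_one,
      Fin.reduceCastSucc, Matrix.cons_val, Pi.sub_apply, Pi.smul_apply, smul_eq_mul]
    ring

lemma actsAsAffinePerm_affRefl (i : Fin 3) : ActsAsAffinePerm k (affRefl k i) := by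
  fin_cases i <;>
    [refine ⟨Equiv.swap 0 2, ![1, 0, -1], fun l => ?_⟩;
     refine ⟨Equiv.swap 0 1, 0, fun l => ?_⟩;
     refine ⟨Equiv.swap 1 2, 0, fun l => ?_⟩] <;>
  · ext j
    fin_cases j <;>
      simp only [affRefl_apply, affEps, affLevel, affRoot, Function.comp_apply, Equiv.swap_apply_def,
        Fin.reduceEq, ↓reduceIte, Pi.zero_apply, Int.cast_zero, Fin.isValue, Fin.zero_eta,
        Fin.mk_one, Fin.reduceFinMk, Fin.castSucc_zero, Fin.castSucc_one, Fin.reduceCastSucc,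
        Matrix.cons_val, Pi.add_apply, Pi.sub_apply, Pi.smul_apply, smul_eq_mul] <;>
      ring

lemma affForm_map_of_mem {u : Vaff k ≃ₗ[k] Vaff k} (hu : u ∈ affWeylGroup k) (l m : Vaff k) :
    affForm k (u l) (u m) = affForm k l m := by
  induction hu using affWeylGroup_induction generalizing l m with
  | refl i => exact affForm_affRefl k i l m
  | one => rfl
  | mul u v _ _ hu hv => exact (hu _ _).trans (hv l m)

lemma affLevel_map_of_mem {u : Vaff k ≃ₗ[k] Vaff k} (hu : u ∈ affWeylGroup k) (l : Vaff k) :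
    affLevel k (u l) = affLevel k l := by
  rw [← affForm_affDelta, ← map_affDelta_of_mem k hu, affForm_map_of_mem k hu, affForm_affDelta]

lemma actsAsAffinePerm_of_mem {u : Vaff k ≃ₗ[k] Vaff k} (hu : u ∈ affWeylGroup k) :
    ActsAsAffinePerm k u := by
  induction hu using affWeylGroup_induction with
  | refl i => exact actsAsAffinePerm_affRefl k i
  | one => exact ⟨1, 0, fun l => by ext; simp⟩
  | mul u v _ hv hu' hv' => exact hu'.mul k hv' (affLevel_map_of_mem k hv)

lemma Equiv.Perm.eq_one_of_comp_add_smul_eq {ι : Type*} {a : ι → ℤ} {m : ℤ} (hm : m ≠ 0)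
    (ha : ∀ i j, a i ≡ a j [ZMOD m] → i = j) {σ : Equiv.Perm ι} {t : ι → ℤ}
    (h : a ∘ σ + m • t = a) : σ = 1 ∧ t = 0 := by
  have hj (j : ι) : a (σ j) + m * t j = a j := congrFun h j
  have hσ : σ = 1 := Equiv.ext fun j =>
    ha (σ j) j (Int.modEq_iff_dvd.mpr ⟨t j, by linear_combination -hj j⟩)
  refine ⟨hσ, funext fun j => ?_⟩
  simpa [hσ, hm] using hj j

lemma affEps_affRho : affEps k (affRho k) = fun j => ((![1, 0, -1] : Fin 3 → ℤ) j : k) := by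
  ext j
  fin_cases j <;> norm_num [affEps, affRho, Matrix.cons_val_two]

lemma affForm_add_smul_affDelta (l : Vaff k) (c : k) :
    affForm k (l + c • affDelta k) (l + c • affDelta k) = affForm k l l + 2 * c * affLevel k l := by
  simp only [affForm, affEps, affLevel, affDelta, affRoot, Fin.sum_univ_three, Fin.isValue,
    Matrix.cons_val, Pi.add_apply, Pi.smul_apply, smul_eq_mul]
  ring

lemma affVec_ext {l m : Vaff k} (h_eps : affEps k l = affEps k m)
    (h_level : affLevel k l = affLevel k m) (h_d : l 3 = m 3) : l = m := by
  have h0 := congrFun h_eps 0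
  have h1 := congrFun h_eps 1
  simp only [affEps, affLevel, Matrix.cons_val] at h0 h1 h_level
  have e1 : l 1 = m 1 := by linear_combination h0 - h1
  have e2 : l 2 = m 2 := by linear_combination h0 + 2 * h1
  have e0 : l 0 = m 0 := by linear_combination h_level - e1 - e2
  ext j
  fin_cases j <;> assumption

lemma eq_one_of_map_affRho_eq_self {u : Vaff k ≃ₗ[k] Vaff k} (hu : u ∈ affWeylGroup k)
    (h : u (affRho k) = affRho k) : u = 1 := by
  obtain ⟨σ, t, hσt⟩ := actsAsAffinePerm_of_mem k hu
  have hρ := hσt (affRho k)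
  rw [h, affLevel_affRho, affEps_affRho] at hρ
  obtain ⟨rfl, rfl⟩ : σ = 1 ∧ t = 0 := by
    refine Equiv.Perm.eq_one_of_comp_add_smul_eq (a := ![1, 0, -1]) three_ne_zero (by decide) ?_
    ext j
    have hj := congrFun hρ j
    simp only [Pi.add_apply, Function.comp_apply, Pi.smul_apply, smul_eq_mul] at hj ⊢
    exact_mod_cast hj.symm
  have h_eps (l : Vaff k) : affEps k (u l) = affEps k l := by simpa [← Pi.zero_def] using hσt l
  refine LinearEquiv.ext fun l => affVec_ext k (h_eps l) (affLevel_map_of_mem k hu l) ?_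
  have h_form := affForm_map_of_mem k hu l (affRho k)
  rw [h, affForm_affRho, affForm_affRho, h_eps] at h_form
  exact mul_left_cancel₀ three_ne_zero (add_left_cancel h_form)

lemma eq_one_of_map_affRho_eq_add_smul_affDelta {u : Vaff k ≃ₗ[k] Vaff k}
    (hu : u ∈ affWeylGroup k) {c : k} (h : u (affRho k) = affRho k + c • affDelta k) : u = 1 := by
  have h_norm := affForm_map_of_mem k hu (affRho k) (affRho k)
  rw [h, affForm_add_smul_affDelta, affLevel_affRho, add_eq_left] at h_norm
  have hc : c = 0 := by simpa using h_norm
  exact eq_one_of_map_affRho_eq_self k hu (by rw [h, hc, zero_smul, add_zero])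

/-- For the affine Weyl group `W` of type `A₂⁽¹⁾`: if `w ≠ w'` in `W`, then
`w(ρ) - ρ` and `w'(ρ) - ρ` are not congruent modulo `ℤδ`. -/
theorem affWeyl_rho_not_congruent_mod_delta
    (w w' : Vaff k ≃ₗ[k] Vaff k) (hw : w ∈ affWeylGroup k) (hw' : w' ∈ affWeylGroup k)
    (hne : w ≠ w') (n : ℤ) :
    (w (affRho k) - affRho k) - (w' (affRho k) - affRho k) ≠ n • affDelta k := by
  intro h
  have h_u : (w'⁻¹ * w) (affRho k) = affRho k + (n : k) • affDelta k := by
    have : w (affRho k) = w' (affRho k + (n : k) • affDelta k) := by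
      rw [map_add, map_smul, map_affDelta_of_mem k hw', Int.cast_smul_eq_zsmul, ← h]
      abel
    rw [LinearEquiv.mul_apply, this]
    exact w'.symm_apply_apply _
  exact hne (inv_mul_eq_one.mp
    (eq_one_of_map_affRho_eq_add_smul_affDelta k (mul_mem (inv_mem hw') hw) h_u)).symm

end A2affine
end
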